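/- arXiv:2202.01574 — 2 statements merged into one kernel-verified Lean document; each statement's English description precedes it below -/
import Mathlib

section
/- Let φ : (0, ∞) → (0, ∞) be differentiable and eventually convex. Then there exists a constant R > 0 such that φ(x) ≤ 2 φ(x + φ(x)) for all x ≥ R. -/
open Set Filter

/-- **Eventual convexity lemma.** Let `φ : (0, ∞) → (0, ∞)` be differentiable and
eventually convex. Then there exists `R > 0` such that `φ(x) ≤ 2 φ(x + φ(x))` for all
`x ≥ R`. -/
theorem eventually_convex_doubling
    (φ : ℝ → ℝ)
    (hpos : ∀ x ∈ Set.Ioi (0:ℝ), 0 < φ x)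
    (hdiff : DifferentiableOn ℝ φ (Set.Ioi (0:ℝ)))
    (hconv : ∃ R0 > (0:ℝ), ConvexOn ℝ (Set.Ioi R0) φ) :
    ∃ R > (0:ℝ), ∀ x ≥ R, φ x ≤ 2 * φ (x + φ x) := by
  obtain ⟨R0, hR0, hc⟩ := hconv
  set a : ℝ := R0 + 1 with ha
  have ha0 : (0:ℝ) < a := by linarith
  have haR0 : a ∈ Set.Ioi R0 := by simp [ha]
  have hφa : 0 < φ a := hpos a ha0
  refine ⟨a + 2 * φ a, by linarith, ?_⟩
  intro x hx
  have hax : a < x := by linarith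
  have hx0 : (0:ℝ) < x := by linarith
  have hφx : 0 < φ x := hpos x hx0
  have hxR0 : x ∈ Set.Ioi R0 := by simp; linarith
  have hz0 : (0:ℝ) < x + φ x := by linarith
  have hzR0 : x + φ x ∈ Set.Ioi R0 := by simp; linarith
  have hφz : 0 < φ (x + φ x) := hpos _ hz0
  have hslope := hc.slope_mono_adjacent haR0 hzR0 hax (by linarith : x < x + φ x)
  -- (φ x - φ a)/(x - a) ≤ (φ (x+φx) - φ x)/(φ x)
  have hxa : (0:ℝ) < x - a := by linarith
  have h1 : (-(1:ℝ)/2) ≤ (φ x - φ a) / (x - a) := by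
    rw [div_le_div_iff₀ (by norm_num) hxa] at *
    · nlinarith [hφx, hφa]
  have h2 : (-(1:ℝ)/2) ≤ (φ (x + φ x) - φ x) / (x + φ x - x) := le_trans h1 hslope
  have h3 : x + φ x - x = φ x := by ring
  rw [h3, le_div_iff₀ hφx] at h2
  nlinarith
end

section
/- Let {r_n} ⊂ [1, ∞) be a strictly increasing sequence tending to infinity. Suppose κ : (0, ∞) → [1, ∞) is a non-decreasing differentiable function such that 1/κ(x) is eventually convex and Σ_{n=1}^∞ 1/κ(r_n) < ∞. Let I = ∪_{n=1}^∞ I_n, where I_n = [r_n − 1/κ(r_n), r_n + 1/κ(r_n)]. Suppose u, v : (0, ∞) → (0, ∞) are non-decreasing functions with u(r) ≤ v(r) for all r ∉ I, and suppose that at most a finite uniform number K ∈ ℕ of consecutive intervals I_n can overlap (i.e., each cluster of mutually overlapping consecutive intervals contains at most K of the I_n). Let α = α(r) = 1 + 5K/(r κ(r)). Then there exists a constant R > 0 such that u(r) ≤ v(α r) for all r ≥ R. -/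
open Set Filter

/-- **Exceptional set lemma.** Let `{r_n} ⊆ [1, ∞)` be strictly increasing with
`r_n → ∞`, and let `κ : (0, ∞) → [1, ∞)` be non-decreasing and differentiable with `1/κ`
eventually convex and `Σ_n 1/κ(r_n) < ∞`. Put `I = ⋃_n [r_n - 1/κ(r_n), r_n + 1/κ(r_n)]`.
Let `u, v : (0, ∞) → (0, ∞)` be non-decreasing with `u(r) ≤ v(r)` for `r ∉ I`, and assume
that at most `K ∈ ℕ` consecutive intervals `I_n` can overlap. With
`α(r) = 1 + 5K/(r κ(r))`, there exists `R > 0` such that `u(r) ≤ v(α(r) r)` for all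
`r ≥ R`. -/
theorem exceptional_set_lemma
    (r : ℕ → ℝ) (hr1 : ∀ n, 1 ≤ r n) (hrmono : StrictMono r)
    (hrtop : Tendsto r atTop atTop)
    (κ : ℝ → ℝ) (hκ1 : ∀ x ∈ Set.Ioi (0:ℝ), 1 ≤ κ x)
    (hκmono : MonotoneOn κ (Set.Ioi (0:ℝ)))
    (hκdiff : DifferentiableOn ℝ κ (Set.Ioi (0:ℝ)))
    (hκconv : ∃ R0 > (0:ℝ), ConvexOn ℝ (Set.Ioi R0) fun x => 1 / κ x)
    (hκsum : Summable fun n => 1 / κ (r n))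
    (I : Set ℝ)
    (hI : I = ⋃ n : ℕ, Set.Icc (r n - 1 / κ (r n)) (r n + 1 / κ (r n)))
    (u v : ℝ → ℝ)
    (hupos : ∀ x ∈ Set.Ioi (0:ℝ), 0 < u x) (hvpos : ∀ x ∈ Set.Ioi (0:ℝ), 0 < v x)
    (humono : MonotoneOn u (Set.Ioi (0:ℝ))) (hvmono : MonotoneOn v (Set.Ioi (0:ℝ)))
    (huv : ∀ x ∈ Set.Ioi (0:ℝ), x ∉ I → u x ≤ v x)
    (K : ℕ) (hK : 1 ≤ K)
    (hoverlap : ∀ m t : ℕ,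
      (∀ j, m ≤ j → j < m + t →
        (Set.Icc (r j - 1 / κ (r j)) (r j + 1 / κ (r j)) ∩
          Set.Icc (r (j+1) - 1 / κ (r (j+1))) (r (j+1) + 1 / κ (r (j+1)))).Nonempty) →
      t + 1 ≤ K) :
    ∃ R > (0:ℝ), ∀ x ≥ R, u x ≤ v ((1 + 5 * K / (x * κ x)) * x) := by
  classical
  obtain ⟨R0, hR0pos, hconv⟩ := hκconv
  have hrpos : ∀ m, (0:ℝ) < r m := fun m => lt_of_lt_of_le one_pos (hr1 m)
  have hκpos : ∀ z : ℝ, 0 < z → (0:ℝ) < κ z := fun z hz =>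
    lt_of_lt_of_le one_pos (hκ1 z hz)
  have hfpos : ∀ z : ℝ, 0 < z → (0:ℝ) < 1 / κ z := fun z hz => by
    have := hκpos z hz; positivity
  have hfle1 : ∀ z : ℝ, 0 < z → 1 / κ z ≤ 1 := fun z hz => by
    rw [div_le_one (hκpos z hz)]
    exact hκ1 z hz
  have hfanti : ∀ a b : ℝ, 0 < a → a ≤ b → 1 / κ b ≤ 1 / κ a := fun a b ha hab =>
    one_div_le_one_div_of_le (hκpos a ha)
      (hκmono (Set.mem_Ioi.mpr ha) (Set.mem_Ioi.mpr (lt_of_lt_of_le ha hab)) hab)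
  -- Key slope estimate from convexity
  have key : ∀ b c : ℝ, R0 + 3 ≤ b → b ≤ c → 1 / κ b - 1 / κ c ≤ (c - b) / 2 := by
    intro b c hb hbc
    rcases eq_or_lt_of_le hbc with rfl | hlt
    · simp
    · have ha : (R0 + 1 : ℝ) ∈ Set.Ioi R0 := Set.mem_Ioi.mpr (by linarith)
      have hc' : c ∈ Set.Ioi R0 := Set.mem_Ioi.mpr (by linarith)
      have hab : (R0 + 1 : ℝ) < b := by linarith
      have hs := hconv.slope_mono_adjacent ha hc' hab hlt
      have hba : (0:ℝ) < b - (R0+1) := by linarith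
      have hcb : (0:ℝ) < c - b := by linarith
      have hfb : 0 < 1 / κ b := hfpos b (by linarith)
      have hfa1 : 1 / κ (R0+1) ≤ 1 := hfle1 (R0+1) (by linarith)
      have h2 : -(1/2 : ℝ) ≤ (1 / κ b - 1 / κ (R0+1)) / (b - (R0+1)) := by
        rw [le_div_iff₀ hba]
        linarith
      have h3 : -(1/2:ℝ) ≤ (1 / κ c - 1 / κ b) / (c - b) := le_trans h2 hs
      rw [le_div_iff₀ hcb] at h3
      linarith
  refine ⟨R0 + 4, by linarith, ?_⟩
  intro x hx
  have hx0 : (0:ℝ) < x := by linarith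
  have hκx := hκpos x hx0
  have hfx : (0:ℝ) < 1 / κ x := hfpos x hx0
  have hK1 : (1:ℝ) ≤ (K:ℝ) := by exact_mod_cast hK
  have hT : (1 + 5 * (K:ℝ) / (x * κ x)) * x = x + 5 * K * (1 / κ x) := by
    field_simp
  have hfKx : (0:ℝ) < 5 * K * (1 / κ x) := by nlinarith
  have hTpos : (0:ℝ) < x + 5 * K * (1 / κ x) := by linarith
  have hxle : x ≤ x + 5 * K * (1 / κ x) := by linarith
  by_cases hxI : x ∈ I
  case neg =>
    have h1 := huv x (Set.mem_Ioi.mpr hx0) hxI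
    have h2 : v x ≤ v (x + 5 * K * (1 / κ x)) :=
      hvmono (Set.mem_Ioi.mpr hx0) (Set.mem_Ioi.mpr hTpos) hxle
    rw [hT]
    linarith
  case pos =>
  rw [hI] at hxI
  simp only [Set.mem_iUnion] at hxI
  have hex : ∃ n, x ∈ Set.Icc (r n - 1 / κ (r n)) (r n + 1 / κ (r n)) := hxI
  set n := Nat.find hex with hn_def
  have hn : x ∈ Set.Icc (r n - 1 / κ (r n)) (r n + 1 / κ (r n)) := Nat.find_spec hex
  have hnmin : ∀ m, m < n → x ∉ Set.Icc (r m - 1 / κ (r m)) (r m + 1 / κ (r m)) :=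
    fun m hm => Nat.find_min hex hm
  have hrn3 : R0 + 3 ≤ r n := by
    have h1 : x ≤ r n + 1 / κ (r n) := hn.2
    have h2 : 1 / κ (r n) ≤ 1 := hfle1 _ (hrpos n)
    linarith
  have hrm3 : ∀ m, n ≤ m → R0 + 3 ≤ r m := fun m hm => le_trans hrn3 (hrmono.monotone hm)
  have hLmono : Monotone (fun m => r m - 1 / κ (r m)) := by
    apply monotone_nat_of_le_succ
    intro m
    have h1 : r m ≤ r (m+1) := le_of_lt (hrmono (Nat.lt_succ_self m))
    have h2 : 1 / κ (r (m+1)) ≤ 1 / κ (r m) := hfanti _ _ (hrpos m) h1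
    linarith
  have hRtstep : ∀ q, n ≤ q → r q + 1 / κ (r q) ≤ r (q+1) + 1 / κ (r (q+1)) := by
    intro q hq
    have h2 : r q < r (q+1) := hrmono (Nat.lt_succ_self q)
    have h1 := key (r q) (r (q+1)) (hrm3 q hq) (le_of_lt h2)
    linarith
  have hRtmono : ∀ p q, n ≤ p → p ≤ q → r p + 1 / κ (r p) ≤ r q + 1 / κ (r q) := by
    intro p q hp hpq
    induction q, hpq using Nat.le_induction with
    | base => exact le_refl _
    | succ q hq ih => exact le_trans ih (hRtstep q (le_trans hp hq))
  have hjex : ∃ j, n ≤ j ∧ r j + 1 / κ (r j) < r (j+1) - 1 / κ (r (j+1)) := by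
    by_contra hcon
    push_neg at hcon
    have hc := hoverlap n K ?_
    · omega
    · intro q hq1 hq2
      refine ⟨r (q+1) - 1 / κ (r (q+1)),
        Set.mem_Icc.mpr ⟨hLmono (Nat.le_succ q), hcon q hq1⟩,
        Set.mem_Icc.mpr ⟨le_refl _, by have := hfpos (r (q+1)) (hrpos _); linarith⟩⟩
  set j := Nat.find hjex with hj_def
  obtain ⟨hnj, hjgap⟩ : n ≤ j ∧ r j + 1 / κ (r j) < r (j+1) - 1 / κ (r (j+1)) :=
    Nat.find_spec hjex
  have hjmin : ∀ q, n ≤ q → q < j → r (q+1) - 1 / κ (r (q+1)) ≤ r q + 1 / κ (r q) := by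
    intro q hq hqj
    have h := Nat.find_min hjex hqj
    push_neg at h
    exact h hq
  have hchain : j - n + 1 ≤ K := by
    apply hoverlap n (j - n)
    intro q hq1 hq2
    have hqj : q < j := by omega
    refine ⟨r (q+1) - 1 / κ (r (q+1)),
      Set.mem_Icc.mpr ⟨hLmono (Nat.le_succ q), hjmin q hq1 hqj⟩,
      Set.mem_Icc.mpr ⟨le_refl _, by have := hfpos (r (q+1)) (hrpos _); linarith⟩⟩
  have hgrow : ∀ q, n ≤ q → q ≤ j →
      r q + 1 / κ (r q) ≤ x + 2 * ((q - n + 1 : ℕ) : ℝ) * (1 / κ (r n)) := by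
    intro q hq hqj
    induction q, hq using Nat.le_induction with
    | base =>
      have h1 : r n - 1 / κ (r n) ≤ x := hn.1
      have hc : ((n - n + 1 : ℕ) : ℝ) = 1 := by
        norm_num
      rw [hc]
      linarith
    | succ q hq ih =>
      have hqj' : q ≤ j := by omega
      have ihq := ih hqj'
      have hstep : r (q+1) - 1/κ (r (q+1)) ≤ r q + 1/κ (r q) := hjmin q hq (by omega)
      have hfq : 1 / κ (r (q+1)) ≤ 1 / κ (r n) :=
        hfanti _ _ (hrpos n) (hrmono.monotone (by omega))
      have hc : (q + 1 - n + 1 : ℕ) = (q - n + 1) + 1 := by omega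
      rw [hc]
      have hc2 : (((q - n + 1) + 1 : ℕ) : ℝ) = ((q - n + 1 : ℕ) : ℝ) + 1 := by push_cast; ring
      rw [hc2]
      have hring : 2 * (((q - n + 1 : ℕ) : ℝ) + 1) * (1 / κ (r n))
          = 2 * ((q - n + 1 : ℕ) : ℝ) * (1 / κ (r n)) + 2 * (1 / κ (r n)) := by ring
      rw [hring]
      linarith
  have hfn : 0 < 1 / κ (r n) := hfpos _ (hrpos n)
  have hRtj : r j + 1 / κ (r j) ≤ x + 2 * (K:ℝ) * (1 / κ (r n)) := by
    have h := hgrow j hnj le_rfl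
    have hcast : ((j - n + 1 : ℕ):ℝ) ≤ (K:ℝ) := by exact_mod_cast hchain
    nlinarith
  have hfn2fx : 1 / κ (r n) ≤ 2 * (1 / κ x) := by
    rcases le_or_gt x (r n) with h | h
    · have h1 := hfanti x (r n) hx0 h
      linarith
    · have hkey := key (r n) x hrn3 (le_of_lt h)
      have hxn : x - r n ≤ 1 / κ (r n) := by have := hn.2; linarith
      linarith
  have hRtjT : r j + 1 / κ (r j) < x + 5 * (K:ℝ) * (1 / κ x) := by
    nlinarith
  set y := (r j + 1 / κ (r j)
      + min (r (j+1) - 1 / κ (r (j+1))) (x + 5 * (K:ℝ) * (1 / κ x))) / 2 with hy_def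
  have hmin1 : r j + 1 / κ (r j)
      < min (r (j+1) - 1 / κ (r (j+1))) (x + 5 * (K:ℝ) * (1 / κ x)) := lt_min hjgap hRtjT
  have hy1 : r j + 1 / κ (r j) < y := by
    rw [hy_def]; linarith
  have hy2 : y < min (r (j+1) - 1 / κ (r (j+1))) (x + 5 * (K:ℝ) * (1 / κ x)) := by
    rw [hy_def]; linarith
  have hyL : y < r (j+1) - 1 / κ (r (j+1)) := lt_of_lt_of_le hy2 (min_le_left _ _)
  have hyT : y ≤ x + 5 * (K:ℝ) * (1 / κ x) := le_of_lt (lt_of_lt_of_le hy2 (min_le_right _ _))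
  have hxy : x ≤ y :=
    le_trans (le_trans hn.2 (hRtmono n j le_rfl hnj)) (le_of_lt hy1)
  have hy0 : (0:ℝ) < y := lt_of_lt_of_le hx0 hxy
  have hyI : y ∉ I := by
    rw [hI]
    simp only [Set.mem_iUnion, Set.mem_Icc, not_exists]
    intro m hm
    obtain ⟨hm1, hm2⟩ := hm
    rcases lt_or_ge m n with hmn | hmn
    · have hxm := hnmin m hmn
      have hLm : r m - 1 / κ (r m) ≤ x := le_trans (hLmono (le_of_lt hmn)) hn.1
      have hRm : r m + 1 / κ (r m) < x := by
        by_contra hcc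
        push_neg at hcc
        exact hxm (Set.mem_Icc.mpr ⟨hLm, hcc⟩)
      linarith
    · rcases le_or_gt m j with hmj | hmj
      · have h := hRtmono m j hmn hmj
        linarith
      · have h : r (j+1) - 1 / κ (r (j+1)) ≤ r m - 1 / κ (r m) := hLmono hmj
        linarith
  have h1 : u x ≤ u y := humono (Set.mem_Ioi.mpr hx0) (Set.mem_Ioi.mpr hy0) hxy
  have h2 : u y ≤ v y := huv y (Set.mem_Ioi.mpr hy0) hyI
  have h3 : v y ≤ v (x + 5 * (K:ℝ) * (1 / κ x)) :=
    hvmono (Set.mem_Ioi.mpr hy0) (Set.mem_Ioi.mpr hTpos) hyT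
  rw [hT]
  linarith
end
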